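/- Let U be a finite (H,G)-biset. The functor U∘− : G-Set → H-Set preserves pullbacks: given G-maps f : X → Z and g : Y → Z, the canonical H-map U∘(X ×_Z Y) → (U∘X) ×_{U∘Z} (U∘Y) sending [u,(x,y)] to ([u,x],[u,y]) is a bijection. -/

import Mathlib

/-- An `H`-`G`-biset: a set `U` with a left `H`-action and a right `G`-action
which commute with each other. -/
structure Biset (H G U : Type) [Group H] [Group G] : Type where
  l : H → U → U
  r : U → G → U
  l_one : ∀ u, l 1 u = u
  l_mul : ∀ h h' u, l (h * h') u = l h (l h' u)
  r_one : ∀ u, r u 1 = u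
  r_mul : ∀ u g g', r (r u g) g' = r u (g * g')
  compat : ∀ h u g, r (l h u) g = l h (r u g)

variable {H G U : Type} [Group H] [Group G]

/-- Pairs `(u,x)` such that the left stabilizer of `u` in `G` is contained in
the stabilizer of `x`. -/
def GoodPair (B : Biset H G U) (X : Type) [MulAction G X] : Type :=
  {p : U × X // ∀ g : G, B.r p.1 g = p.1 → g • p.2 = p.2}

/-- The relation `(u,x) ∼ (u',x')` iff `∃ g, u' = ug ∧ x = g • x'`. -/
def BisetRel (B : Biset H G U) (X : Type) [MulAction G X] (p q : GoodPair B X) : Prop :=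
  ∃ g : G, q.1.1 = B.r p.1.1 g ∧ p.1.2 = g • q.1.2

/-- The biset transformation `U∘X` of a `G`-set `X`. -/
def UoX (B : Biset H G U) (X : Type) [MulAction G X] : Type :=
  Quot (BisetRel B X)

/-- `h • (u,x) = (hu, x)` on good pairs. -/
def hAct (B : Biset H G U) {X : Type} [MulAction G X] (h : H) (p : GoodPair B X) :
    GoodPair B X :=
  ⟨(B.l h p.1.1, p.1.2), fun g hg => p.2 g (by
    have hinj : Function.Injective (B.l h) := fun a b hab => by
      have := congrArg (B.l h⁻¹) hab
      rwa [← B.l_mul, ← B.l_mul, inv_mul_cancel, B.l_one, B.l_one] at this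
    exact hinj (by rw [B.compat] at hg; exact hg))⟩

/-- The left `H`-action `h • [u,x] = [hu,x]` on `U∘X`. -/
def hSmul (B : Biset H G U) {X : Type} [MulAction G X] (h : H) : UoX B X → UoX B X :=
  Quot.lift (fun p => Quot.mk _ (hAct B h p)) (fun p q hpq => Quot.sound (by
    obtain ⟨g, h1, h2⟩ := hpq
    exact ⟨g, by show B.l h q.1.1 = B.r (B.l h p.1.1) g; rw [B.compat, ← h1], h2⟩))

/-- `(u,x) ↦ (u, f x)` on good pairs, for a `G`-map `f`. -/
def mapPair (B : Biset H G U) {X Y : Type} [MulAction G X] [MulAction G Y]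
    (f : X → Y) (hf : ∀ (g : G) (x : X), f (g • x) = g • f x) (p : GoodPair B X) :
    GoodPair B Y :=
  ⟨(p.1.1, f p.1.2), fun g hg => by rw [← hf, p.2 g hg]⟩

/-- The map `U∘f : U∘X → U∘Y`, `[u,x] ↦ [u, f x]`. -/
def UoMap (B : Biset H G U) {X Y : Type} [MulAction G X] [MulAction G Y]
    (f : X → Y) (hf : ∀ (g : G) (x : X), f (g • x) = g • f x) : UoX B X → UoX B Y :=
  Quot.lift (fun p => Quot.mk _ (mapPair B f hf p)) (fun p q hpq => Quot.sound (by
    obtain ⟨g, h1, h2⟩ := hpq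
    exact ⟨g, h1, by show f p.1.2 = g • f q.1.2; rw [h2, hf]⟩))

/-- Equivariance of a map between `G`-sets. -/
def Equivariant (G : Type) [Group G] {X Y : Type} [MulAction G X] [MulAction G Y]
    (f : X → Y) : Prop :=
  ∀ (g : G) (x : X), f (g • x) = g • f x

/-- The `G`-action on the pullback `X ×_Z Y`. -/
def pbMulAction {G : Type} [Group G] {X Y Z : Type} [MulAction G X] [MulAction G Y]
    [MulAction G Z] (f : X → Z) (g : Y → Z) (hf : Equivariant G f) (hg : Equivariant G g) :
    MulAction G {p : X × Y // f p.1 = g p.2} where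
  smul c p := ⟨(c • p.1.1, c • p.1.2), by rw [hf, hg, p.2]⟩
  one_smul p := Subtype.ext (by show ((1:G) • p.1.1, (1:G) • p.1.2) = p.1; simp)
  mul_smul a b p := Subtype.ext (by
    show (((a*b) • p.1.1, (a*b) • p.1.2) : X × Y) = (a • (b • p.1.1), a • (b • p.1.2))
    simp [mul_smul])

namespace UoX

variable (B : Biset H G U)

theorem bisetRel_equivalence (X : Type) [MulAction G X] : Equivalence (BisetRel B X) where
  refl _ := ⟨1, (B.r_one _).symm, (one_smul _ _).symm⟩
  symm := fun ⟨g, hu, hx⟩ =>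
    ⟨g⁻¹, by rw [hu, B.r_mul, mul_inv_cancel, B.r_one], by rw [hx, inv_smul_smul]⟩
  trans := fun ⟨g, hu, hx⟩ ⟨g', hu', hx'⟩ =>
    ⟨g * g', by rw [hu', hu, B.r_mul], by rw [hx, hx', mul_smul]⟩

variable {B}

theorem mk_eq_mk_iff {X : Type} [MulAction G X] {p q : GoodPair B X} :
    Quot.mk (BisetRel B X) p = Quot.mk (BisetRel B X) q ↔ BisetRel B X p q :=
  ⟨fun h => (bisetRel_equivalence B X).eqvGen_iff.mp (Quot.eqvGen_exact h), Quot.sound⟩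

end UoX

namespace GoodPair

variable {B : Biset H G U} {X : Type} [MulAction G X]

theorem smul_eq_smul_of_r_eq (q : GoodPair B X) {u : U} {g₁ g₂ : G}
    (h₁ : q.1.1 = B.r u g₁) (h₂ : q.1.1 = B.r u g₂) : g₁ • q.1.2 = g₂ • q.1.2 := by
  have hstab : B.r q.1.1 (g₁⁻¹ * g₂) = q.1.1 := by
    rw [h₁, B.r_mul, mul_inv_cancel_left, ← h₂, ← h₁]
  calc g₁ • q.1.2 = g₁ • (g₁⁻¹ * g₂) • q.1.2 := by rw [q.2 _ hstab]
    _ = g₂ • q.1.2 := by rw [smul_smul, mul_inv_cancel_left]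

/-- The stabilizer of `u s` is the conjugate by `s` of the stabilizer of `u`. -/
theorem smul_smul_eq_of_r_eq (q : GoodPair B X) {u : U} {s t : G} (hu : q.1.1 = B.r u s)
    (ht : B.r u t = u) : t • s • q.1.2 = s • q.1.2 := by
  have hstab : B.r q.1.1 (s⁻¹ * t * s) = q.1.1 := by
    rw [hu, B.r_mul, mul_assoc, mul_inv_cancel_left, ← B.r_mul, ht]
  calc t • s • q.1.2 = s • (s⁻¹ * t * s) • q.1.2 := by
        rw [smul_smul, smul_smul, mul_assoc, mul_inv_cancel_left]
    _ = s • q.1.2 := by rw [q.2 _ hstab]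

end GoodPair

section

variable {B : Biset H G U} {W X Y Z : Type}
  [MulAction G W] [MulAction G X] [MulAction G Y] [MulAction G Z]

theorem uoMap_comp_eq_of_comp_eq {a : W → X} {b : W → Y} {f : X → Z} {g : Y → Z}
    (ha : Equivariant G a) (hb : Equivariant G b) (hf : Equivariant G f) (hg : Equivariant G g)
    (h : ∀ w, f (a w) = g (b w)) (p : UoX B W) :
    UoMap B f hf (UoMap B a ha p) = UoMap B g hg (UoMap B b hb p) := by
  induction p using Quot.ind with
  | mk p => exact congrArg (Quot.mk _) (Subtype.ext (Prod.ext rfl (h p.1.2)))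

/-- The point is that `[u, w] = [u', w']` may be witnessed by one `g` for `a` and by another for
`b`; these two differ by an element of the stabilizer of `u'`, which fixes `b w'`. -/
theorem uoMap_jointly_injective {a : W → X} {b : W → Y}
    (ha : Equivariant G a) (hb : Equivariant G b)
    (hab : ∀ w w', a w = a w' → b w = b w' → w = w') {p q : UoX B W}
    (h₁ : UoMap B a ha p = UoMap B a ha q) (h₂ : UoMap B b hb p = UoMap B b hb q) : p = q := by
  induction p using Quot.ind with | mk p =>
  induction q using Quot.ind with | mk q =>
  obtain ⟨g₁, hu₁, hx⟩ := UoX.mk_eq_mk_iff.mp h₁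
  obtain ⟨g₂, hu₂, hy⟩ := UoX.mk_eq_mk_iff.mp h₂
  have hg : g₂ • b q.1.2 = g₁ • b q.1.2 :=
    (mapPair B b hb q).smul_eq_smul_of_r_eq hu₂ hu₁
  refine Quot.sound ⟨g₁, hu₁, hab _ _ ?_ ?_⟩
  · rw [ha]; exact hx
  · rw [hb, ← hg]; exact hy

theorem uoMap_pullback_surjective {f : X → Z} {g : Y → Z}
    (hf : Equivariant G f) (hg : Equivariant G g) (w : UoX B X × UoX B Y)
    (hw : UoMap B f hf w.1 = UoMap B g hg w.2) :
    letI : MulAction G {p : X × Y // f p.1 = g p.2} := pbMulAction f g hf hg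
    ∃ q : UoX B {p : X × Y // f p.1 = g p.2},
      UoMap B (fun p => p.1.1) (fun _ _ => rfl) q = w.1 ∧
      UoMap B (fun p => p.1.2) (fun _ _ => rfl) q = w.2 := by
  let : MulAction G {p : X × Y // f p.1 = g p.2} := pbMulAction f g hf hg
  obtain ⟨w₁, w₂⟩ := w
  induction w₁ using Quot.ind with | mk a =>
  induction w₂ using Quot.ind with | mk b =>
  obtain ⟨s, hu, hz⟩ := UoX.mk_eq_mk_iff.mp hw
  have hfg : f a.1.2 = g (s • b.1.2) := by rw [hg]; exact hz
  refine ⟨Quot.mk _ ⟨(a.1.1, ⟨(a.1.2, s • b.1.2), hfg⟩), fun t ht => ?_⟩, rfl, ?_⟩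
  · have hy : t • s • b.1.2 = s • b.1.2 := b.smul_smul_eq_of_r_eq hu ht
    exact Subtype.ext (Prod.ext (a.2 t ht) hy)
  · exact Quot.sound ⟨s, hu, rfl⟩

end

theorem stmt4_general (B : Biset H G U)
    (X Y Z : Type) [MulAction G X] [MulAction G Y] [MulAction G Z]
    (f : X → Z) (g : Y → Z) (hf : Equivariant G f) (hg : Equivariant G g) :
    letI : MulAction G {p : X × Y // f p.1 = g p.2} := pbMulAction f g hf hg
    let Φ : UoX B {p : X × Y // f p.1 = g p.2} → UoX B X × UoX B Y := fun q =>
      (UoMap B (fun p : {p : X × Y // f p.1 = g p.2} => p.1.1) (fun _ _ => rfl) q,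
       UoMap B (fun p : {p : X × Y // f p.1 = g p.2} => p.1.2) (fun _ _ => rfl) q)
    Function.Injective Φ ∧
      Set.range Φ = {w : UoX B X × UoX B Y | UoMap B f hf w.1 = UoMap B g hg w.2} := by
  let : MulAction G {p : X × Y // f p.1 = g p.2} := pbMulAction f g hf hg
  refine ⟨fun q q' hq => ?_, Set.ext fun w => ⟨?_, fun hw => ?_⟩⟩
  · exact uoMap_jointly_injective (fun _ _ => rfl) (fun _ _ => rfl)
      (fun _ _ hx hy => Subtype.ext (Prod.ext hx hy)) (congrArg Prod.fst hq) (congrArg Prod.snd hq)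
  · rintro ⟨q, rfl⟩
    exact uoMap_comp_eq_of_comp_eq _ _ hf hg (fun p => p.2) q
  · obtain ⟨q, hq₁, hq₂⟩ := uoMap_pullback_surjective hf hg w hw
    exact ⟨q, Prod.ext hq₁ hq₂⟩

/-- `U∘−` preserves pullbacks: the canonical `H`-map
`U∘(X ×_Z Y) → (U∘X) ×_{U∘Z} (U∘Y)`, `[u,(x,y)] ↦ ([u,x],[u,y])`, is a bijection. -/
theorem stmt4 [Finite G] [Finite H] [Finite U] (B : Biset H G U)
    (X Y Z : Type) [MulAction G X] [MulAction G Y] [MulAction G Z]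
    [Finite X] [Finite Y] [Finite Z]
    (f : X → Z) (g : Y → Z) (hf : Equivariant G f) (hg : Equivariant G g) :
    letI : MulAction G {p : X × Y // f p.1 = g p.2} := pbMulAction f g hf hg
    let Φ : UoX B {p : X × Y // f p.1 = g p.2} → UoX B X × UoX B Y := fun q =>
      (UoMap B (fun p : {p : X × Y // f p.1 = g p.2} => p.1.1) (fun _ _ => rfl) q,
       UoMap B (fun p : {p : X × Y // f p.1 = g p.2} => p.1.2) (fun _ _ => rfl) q)
    Function.Injective Φ ∧
      Set.range Φ = {w : UoX B X × UoX B Y | UoMap B f hf w.1 = UoMap B g hg w.2} :=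
  stmt4_general B X Y Z f g hf hg
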